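/- arXiv:math/0611850 — 4 statements merged into one kernel-verified Lean document; each statement's English description precedes it below -/
import Mathlib

section
/- Let n ≥ 1, let Q = 2n + 2, and let s ∈ ℝ. For every point (z, t) ∈ ℝ^{2n+1} with (z, t) ≠ 0, the Kohn sub-Laplacian of ρ^s satisfies Δ_ℍ (ρ^s)(z, t) = s (s + Q − 2) |z|² ρ(z, t)^{s−4}. In particular, ρ^{2−Q} is Δ_ℍ-harmonic away from the origin. -/
open MeasureTheory Real

noncomputable section

/-- The underlying space of the Heisenberg group ℍⁿ, identified with ℝ^{2n+1}:
points `(x, y, t)` with `x y : Fin n → ℝ`, `t : ℝ`; write `z = (x, y)`. -/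
abbrev Hspace (n : ℕ) : Type := (Fin n → ℝ) × (Fin n → ℝ) × ℝ

/-- The horizontal vector field `X_j f = ∂f/∂x_j + 2 y_j ∂f/∂t`. -/
def Xd (n : ℕ) (j : Fin n) (f : Hspace n → ℝ) (p : Hspace n) : ℝ :=
  fderiv ℝ f p (Pi.single j 1, 0, 0) + 2 * p.2.1 j * fderiv ℝ f p (0, 0, 1)

/-- The horizontal vector field `Y_j f = ∂f/∂y_j − 2 x_j ∂f/∂t`. -/
def Yd (n : ℕ) (j : Fin n) (f : Hspace n → ℝ) (p : Hspace n) : ℝ :=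
  fderiv ℝ f p (0, Pi.single j 1, 0) - 2 * p.1 j * fderiv ℝ f p (0, 0, 1)

/-- Squared length of the horizontal gradient: `|∇_ℍ f|² = Σ_j ((X_j f)² + (Y_j f)²)`. -/
def gradH2 (n : ℕ) (f : Hspace n → ℝ) (p : Hspace n) : ℝ :=
  ∑ j : Fin n, ((Xd n j f p) ^ 2 + (Yd n j f p) ^ 2)

/-- The Kohn sub-Laplacian `Δ_ℍ f = Σ_j (X_j(X_j f) + Y_j(Y_j f))`. -/
def lapH (n : ℕ) (f : Hspace n → ℝ) (p : Hspace n) : ℝ :=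
  ∑ j : Fin n, (Xd n j (Xd n j f) p + Yd n j (Yd n j f) p)

/-- `|z|² = |x|² + |y|²`. -/
def zSq (n : ℕ) (p : Hspace n) : ℝ := ∑ j : Fin n, ((p.1 j) ^ 2 + (p.2.1 j) ^ 2)

/-- The homogeneous norm `ρ(z, t) = (|z|⁴ + t²)^{1/4}`. -/
def rho (n : ℕ) (p : Hspace n) : ℝ := ((zSq n p) ^ 2 + p.2.2 ^ 2) ^ ((4 : ℝ)⁻¹)

namespace HAux

variable {n : ℕ}

def uu (n : ℕ) (p : Hspace n) : ℝ := zSq n p ^ 2 + p.2.2 ^ 2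

lemma uu_nonneg (p : Hspace n) : 0 ≤ uu n p := by unfold uu; positivity

lemma uu_pos {p : Hspace n} (hp : p ≠ 0) : 0 < uu n p := by
  rcases (uu_nonneg p).lt_or_eq with h | h
  · exact h
  · exfalso
    apply hp
    have h' : zSq n p ^ 2 + p.2.2 ^ 2 = 0 := h.symm
    have hz : zSq n p = 0 := by nlinarith [sq_nonneg (zSq n p), sq_nonneg p.2.2]
    have ht : p.2.2 = 0 := by nlinarith [sq_nonneg (zSq n p), sq_nonneg p.2.2]
    have hall : ∀ j : Fin n, p.1 j ^ 2 + p.2.1 j ^ 2 = 0 := by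
      intro j
      exact Finset.sum_eq_zero_iff_of_nonneg (fun i _ => by positivity :
        ∀ i ∈ Finset.univ, (0:ℝ) ≤ p.1 i ^ 2 + p.2.1 i ^ 2) |>.mp hz j (Finset.mem_univ j)
    have hx : p.1 = 0 := funext fun j => by
      have := hall j; simp only [Pi.zero_apply]; nlinarith [sq_nonneg (p.1 j), sq_nonneg (p.2.1 j)]
    have hy : p.2.1 = 0 := funext fun j => by
      have := hall j; simp only [Pi.zero_apply]; nlinarith [sq_nonneg (p.1 j), sq_nonneg (p.2.1 j)]
    exact Prod.ext hx (Prod.ext hy ht)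

lemma rho_pow_eq (s : ℝ) (q : Hspace n) : rho n q ^ s = uu n q ^ (4⁻¹ * s) := by
  rw [show rho n q = uu n q ^ ((4:ℝ)⁻¹) from rfl, ← Real.rpow_mul (uu_nonneg q)]

lemma hasF_sq {f : Hspace n → ℝ} {f' : Hspace n →L[ℝ] ℝ} {q : Hspace n}
    (h : HasFDerivAt f f' q) : HasFDerivAt (fun x => f x ^ 2) ((2 * f q) • f') q := by
  have h2 : HasFDerivAt (fun x => f x * f x) (f q • f' + f q • f') q := h.mul h
  have he : (f q • f' + f q • f') = (2 * f q) • f' := by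
    rw [← add_smul, two_mul]
  rw [he] at h2
  exact h2.congr_of_eventuallyEq (Filter.Eventually.of_forall fun x => by ring)

def dX (n : ℕ) (j : Fin n) : Hspace n →L[ℝ] ℝ :=
  (ContinuousLinearMap.proj j).comp (ContinuousLinearMap.fst ℝ (Fin n → ℝ) ((Fin n → ℝ) × ℝ))
def dY (n : ℕ) (j : Fin n) : Hspace n →L[ℝ] ℝ :=
  ((ContinuousLinearMap.proj j).comp (ContinuousLinearMap.fst ℝ (Fin n → ℝ) ℝ)).comp
    (ContinuousLinearMap.snd ℝ (Fin n → ℝ) ((Fin n → ℝ) × ℝ))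
def dT (n : ℕ) : Hspace n →L[ℝ] ℝ :=
  (ContinuousLinearMap.snd ℝ (Fin n → ℝ) ℝ).comp
    (ContinuousLinearMap.snd ℝ (Fin n → ℝ) ((Fin n → ℝ) × ℝ))

@[simp] lemma dX_apply (j : Fin n) (v : Hspace n) : dX n j v = v.1 j := rfl
@[simp] lemma dY_apply (j : Fin n) (v : Hspace n) : dY n j v = v.2.1 j := rfl
@[simp] lemma dT_apply (v : Hspace n) : dT n v = v.2.2 := rfl

lemma hasF_x (j : Fin n) (q : Hspace n) : HasFDerivAt (fun q : Hspace n => q.1 j) (dX n j) q :=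
  (dX n j).hasFDerivAt
lemma hasF_y (j : Fin n) (q : Hspace n) : HasFDerivAt (fun q : Hspace n => q.2.1 j) (dY n j) q :=
  (dY n j).hasFDerivAt
lemma hasF_t (q : Hspace n) : HasFDerivAt (fun q : Hspace n => q.2.2) (dT n) q :=
  (dT n).hasFDerivAt

lemma hasF_zSq (q : Hspace n) : HasFDerivAt (zSq n)
    (∑ j : Fin n, ((2 * q.1 j) • dX n j + (2 * q.2.1 j) • dY n j)) q := by
  exact HasFDerivAt.fun_sum fun j _ => (hasF_sq (hasF_x j q)).add (hasF_sq (hasF_y j q))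

lemma hasF_uu (q : Hspace n) : HasFDerivAt (uu n)
    ((2 * zSq n q) • (∑ j : Fin n, ((2 * q.1 j) • dX n j + (2 * q.2.1 j) • dY n j))
      + (2 * q.2.2) • dT n) q :=
  (hasF_sq (hasF_zSq q)).add (hasF_sq (hasF_t q))

lemma hasF_rhoS (s : ℝ) {q : Hspace n} (hq : q ≠ 0) :
    HasFDerivAt (fun q => rho n q ^ s)
      ((4⁻¹ * s * uu n q ^ (4⁻¹ * s - 1)) •
        ((2 * zSq n q) • (∑ j : Fin n, ((2 * q.1 j) • dX n j + (2 * q.2.1 j) • dY n j))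
          + (2 * q.2.2) • dT n)) q := by
  have hf := (hasF_uu q).rpow_const (p := 4⁻¹ * s) (Or.inl (uu_pos hq).ne')
  exact hf.congr_of_eventuallyEq (Filter.Eventually.of_forall fun q => rho_pow_eq s q)

lemma Xd_rhoS (s : ℝ) (j : Fin n) {q : Hspace n} (hq : q ≠ 0) :
    Xd n j (fun q => rho n q ^ s) q
      = s * uu n q ^ (4⁻¹ * s - 1) * (zSq n q * q.1 j + q.2.1 j * q.2.2) := by
  unfold Xd
  rw [(hasF_rhoS s hq).fderiv]
  simp [Pi.single_apply, mul_ite, Finset.sum_ite_eq', Finset.mem_univ]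
  ring

lemma Yd_rhoS (s : ℝ) (j : Fin n) {q : Hspace n} (hq : q ≠ 0) :
    Yd n j (fun q => rho n q ^ s) q
      = s * uu n q ^ (4⁻¹ * s - 1) * (zSq n q * q.2.1 j - q.1 j * q.2.2) := by
  unfold Yd
  rw [(hasF_rhoS s hq).fderiv]
  simp [Pi.single_apply, mul_ite, Finset.sum_ite_eq', Finset.mem_univ]
  ring

lemma hasF_upow (c : ℝ) {q : Hspace n} (hq : q ≠ 0) :
    HasFDerivAt (fun q => uu n q ^ c)
      ((c * uu n q ^ (c - 1)) •
        ((2 * zSq n q) • (∑ j : Fin n, ((2 * q.1 j) • dX n j + (2 * q.2.1 j) • dY n j))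
          + (2 * q.2.2) • dT n)) q :=
  (hasF_uu q).rpow_const (Or.inl (uu_pos hq).ne')

lemma XXd (s : ℝ) (j : Fin n) {p : Hspace n} (hp : p ≠ 0) :
    Xd n j (Xd n j (fun q => rho n q ^ s)) p
      = 4 * s * (4⁻¹ * s - 1) * uu n p ^ (4⁻¹ * s - 1 - 1)
          * (zSq n p * p.1 j + p.2.1 j * p.2.2) ^ 2
        + s * uu n p ^ (4⁻¹ * s - 1) * (zSq n p + 2 * p.1 j ^ 2 + 2 * p.2.1 j ^ 2) := by
  have hev : Xd n j (fun q => rho n q ^ s)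
      =ᶠ[nhds p] fun q => s * uu n q ^ (4⁻¹ * s - 1) * (zSq n q * q.1 j + q.2.1 j * q.2.2) := by
    filter_upwards [isOpen_compl_singleton.mem_nhds hp] with q hq
    exact Xd_rhoS s j hq
  have hB : HasFDerivAt (fun q : Hspace n => zSq n q * q.1 j + q.2.1 j * q.2.2)
      ((zSq n p • dX n j + p.1 j • (∑ i : Fin n, ((2 * p.1 i) • dX n i + (2 * p.2.1 i) • dY n i)))
        + (p.2.1 j • dT n + p.2.2 • dY n j)) p :=
    ((hasF_zSq p).mul (hasF_x j p)).add ((hasF_y j p).mul (hasF_t p))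
  have hg := ((hasF_upow (4⁻¹ * s - 1) hp).const_mul s).fun_mul hB
  have hfd := hev.fderiv_eq (𝕜 := ℝ)
  show fderiv ℝ (Xd n j (fun q => rho n q ^ s)) p (Pi.single j 1, 0, 0)
      + 2 * p.2.1 j * fderiv ℝ (Xd n j (fun q => rho n q ^ s)) p (0, 0, 1) = _
  rw [hfd, hg.fderiv]
  simp [Pi.single_apply, mul_ite, Finset.sum_ite_eq', Finset.mem_univ]
  ring

lemma YYd (s : ℝ) (j : Fin n) {p : Hspace n} (hp : p ≠ 0) :
    Yd n j (Yd n j (fun q => rho n q ^ s)) p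
      = 4 * s * (4⁻¹ * s - 1) * uu n p ^ (4⁻¹ * s - 1 - 1)
          * (zSq n p * p.2.1 j - p.1 j * p.2.2) ^ 2
        + s * uu n p ^ (4⁻¹ * s - 1) * (zSq n p + 2 * p.1 j ^ 2 + 2 * p.2.1 j ^ 2) := by
  have hev : Yd n j (fun q => rho n q ^ s)
      =ᶠ[nhds p] fun q => s * uu n q ^ (4⁻¹ * s - 1) * (zSq n q * q.2.1 j - q.1 j * q.2.2) := by
    filter_upwards [isOpen_compl_singleton.mem_nhds hp] with q hq
    exact Yd_rhoS s j hq
  have hB : HasFDerivAt (fun q : Hspace n => zSq n q * q.2.1 j - q.1 j * q.2.2)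
      ((zSq n p • dY n j + p.2.1 j • (∑ i : Fin n, ((2 * p.1 i) • dX n i + (2 * p.2.1 i) • dY n i)))
        - (p.1 j • dT n + p.2.2 • dX n j)) p :=
    ((hasF_zSq p).mul (hasF_y j p)).sub ((hasF_x j p).mul (hasF_t p))
  have hg := ((hasF_upow (4⁻¹ * s - 1) hp).const_mul s).fun_mul hB
  have hfd := hev.fderiv_eq (𝕜 := ℝ)
  show fderiv ℝ (Yd n j (fun q => rho n q ^ s)) p (0, Pi.single j 1, 0)
      - 2 * p.1 j * fderiv ℝ (Yd n j (fun q => rho n q ^ s)) p (0, 0, 1) = _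
  rw [hfd, hg.fderiv]
  simp [Pi.single_apply, mul_ite, Finset.sum_ite_eq', Finset.mem_univ]
  ring

end HAux

open HAux

/-- away from the origin, `Δ_ℍ(ρ^s) = s (s + Q − 2) |z|² ρ^{s−4}`,
where `Q = 2n + 2`; in particular `ρ^{2−Q}` is `Δ_ℍ`-harmonic on `ℝ^{2n+1} \ {0}`. -/
theorem heisenberg_lapH_rho_pow (n : ℕ) (hn : 1 ≤ n) (Q s : ℝ) (hQ : Q = 2 * n + 2)
    (p : Hspace n) (hp : p ≠ 0) :
    lapH n (fun q => rho n q ^ s) p = s * (s + Q - 2) * zSq n p * rho n p ^ (s - 4) := by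
  have hu0 : uu n p ≠ 0 := (uu_pos hp).ne'
  have huu1 : uu n p ^ (4⁻¹ * s - 1 - 1) * (zSq n p ^ 2 + p.2.2 ^ 2) = uu n p ^ (4⁻¹ * s - 1) := by
    rw [show (zSq n p ^ 2 + p.2.2 ^ 2 : ℝ) = uu n p from rfl, ← Real.rpow_add_one hu0]
    congr 1; ring
  have key : ∀ j : Fin n,
      Xd n j (Xd n j (fun q => rho n q ^ s)) p + Yd n j (Yd n j (fun q => rho n q ^ s)) p
      = (s * (s - 4) * uu n p ^ (4⁻¹ * s - 1) + 4 * s * uu n p ^ (4⁻¹ * s - 1))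
          * (p.1 j ^ 2 + p.2.1 j ^ 2)
        + 2 * s * uu n p ^ (4⁻¹ * s - 1) * zSq n p := by
    intro j
    rw [XXd s j hp, YYd s j hp]
    linear_combination (4 * s * (4⁻¹ * s - 1) * (p.1 j ^ 2 + p.2.1 j ^ 2)) * huu1
  unfold lapH
  rw [Finset.sum_congr rfl fun j _ => key j, Finset.sum_add_distrib, ← Finset.mul_sum,
    Finset.sum_const, Finset.card_univ, Fintype.card_fin,
    show (∑ j : Fin n, (p.1 j ^ 2 + p.2.1 j ^ 2)) = zSq n p from rfl,
    rho_pow_eq (s - 4) p, show (4:ℝ)⁻¹ * (s - 4) = 4⁻¹ * s - 1 by ring, nsmul_eq_mul, hQ]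
  ring
end
end

section
/- Let n ≥ 1. For every point (z, t) ∈ ℝ^{2n+1} with (z, t) ≠ 0, the homogeneous norm ρ satisfies the ∞-sub-Laplace equation: Σ_{j=1}^{n} [ (X_j ρ) · X_j(|∇_ℍ ρ|²) + (Y_j ρ) · Y_j(|∇_ℍ ρ|²) ](z, t) = 0, where |∇_ℍ ρ|² = Σ_j ((X_j ρ)² + (Y_j ρ)²). Equivalently, Δ_{ℍ,∞} ρ = (1/2) ⟨∇_ℍ(|∇_ℍ ρ|²), ∇_ℍ ρ⟩ = 0 on ℝ^{2n+1} \ {0}. -/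
open MeasureTheory Real

noncomputable section

namespace HRho


variable {n : ℕ}

def cx (n : ℕ) (j : Fin n) : Hspace n →L[ℝ] ℝ :=
  (ContinuousLinearMap.proj j).comp (ContinuousLinearMap.fst ℝ (Fin n → ℝ) ((Fin n → ℝ) × ℝ))

def cy (n : ℕ) (j : Fin n) : Hspace n →L[ℝ] ℝ :=
  ((ContinuousLinearMap.proj j).comp (ContinuousLinearMap.fst ℝ (Fin n → ℝ) ℝ)).comp
    (ContinuousLinearMap.snd ℝ (Fin n → ℝ) ((Fin n → ℝ) × ℝ))

def ct (n : ℕ) : Hspace n →L[ℝ] ℝ :=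
  (ContinuousLinearMap.snd ℝ (Fin n → ℝ) ℝ).comp
    (ContinuousLinearMap.snd ℝ (Fin n → ℝ) ((Fin n → ℝ) × ℝ))

@[simp] lemma cx_apply (j : Fin n) (q : Hspace n) : cx n j q = q.1 j := rfl
@[simp] lemma cy_apply (j : Fin n) (q : Hspace n) : cy n j q = q.2.1 j := rfl
@[simp] lemma ct_apply (q : Hspace n) : ct n q = q.2.2 := rfl

def uu (n : ℕ) (p : Hspace n) : ℝ := (zSq n p) ^ 2 + p.2.2 ^ 2

lemma zSq_nonneg (p : Hspace n) : 0 ≤ zSq n p :=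
  Finset.sum_nonneg fun j _ => by positivity

lemma uu_pos {p : Hspace n} (hp : p ≠ 0) : 0 < uu n p := by
  rcases (lt_or_eq_of_le (by unfold uu; positivity : (0:ℝ) ≤ uu n p)) with h | h
  · exact h
  exfalso
  simp only [uu] at h
  have hz2 : zSq n p ^ 2 = 0 := by nlinarith [sq_nonneg (zSq n p), sq_nonneg p.2.2]
  have ht : p.2.2 = 0 := by
    have : p.2.2 ^ 2 = 0 := by nlinarith [sq_nonneg (zSq n p), sq_nonneg p.2.2]
    exact pow_eq_zero_iff two_ne_zero |>.mp this
  have hz : zSq n p = 0 := pow_eq_zero_iff two_ne_zero |>.mp hz2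
  have h2 : ∀ j, (p.1 j) ^ 2 + (p.2.1 j) ^ 2 = 0 := fun j =>
    (Finset.sum_eq_zero_iff_of_nonneg (fun j _ => by positivity)).mp hz j (Finset.mem_univ j)
  apply hp
  refine Prod.ext ?_ (Prod.ext ?_ ht)
  · funext j
    have hj := h2 j
    have : p.1 j ^ 2 = 0 := by nlinarith [sq_nonneg (p.1 j), sq_nonneg (p.2.1 j)]
    exact pow_eq_zero_iff two_ne_zero |>.mp this
  · funext j
    have hj := h2 j
    have : p.2.1 j ^ 2 = 0 := by nlinarith [sq_nonneg (p.1 j), sq_nonneg (p.2.1 j)]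
    exact pow_eq_zero_iff two_ne_zero |>.mp this

def Lz (n : ℕ) (p : Hspace n) : Hspace n →L[ℝ] ℝ :=
  ∑ j : Fin n, ((2 * p.1 j) • cx n j + (2 * p.2.1 j) • cy n j)

lemma sq_clm_deriv {f : Hspace n → ℝ} {L : Hspace n →L[ℝ] ℝ} {p : Hspace n}
    (h : HasFDerivAt f L p) :
    HasFDerivAt (fun q => f q ^ 2) ((2 * f p) • L) p := by
  have h2 := h.mul h
  have : (fun q : Hspace n => f q ^ 2) = fun q => f q * f q := by funext q; ring
  rw [this, two_mul, add_smul]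
  exact h2

lemma hasFDerivAt_zSq (p : Hspace n) : HasFDerivAt (zSq n) (Lz n p) p := by
  apply HasFDerivAt.fun_sum
  intro j _
  exact (sq_clm_deriv ((cx n j).hasFDerivAt)).add (sq_clm_deriv ((cy n j).hasFDerivAt))

def Lu (n : ℕ) (p : Hspace n) : Hspace n →L[ℝ] ℝ :=
  (2 * zSq n p) • Lz n p + (2 * p.2.2) • ct n

lemma hasFDerivAt_uu (p : Hspace n) : HasFDerivAt (uu n) (Lu n p) p :=
  (sq_clm_deriv (hasFDerivAt_zSq p)).add (sq_clm_deriv ((ct n).hasFDerivAt))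

-- evaluations of Lz and Lu at the three directions
@[simp] lemma Lz_x (p : Hspace n) (j : Fin n) :
    Lz n p ((Pi.single j 1, 0, 0) : Hspace n) = 2 * p.1 j := by
  simp [Lz, ContinuousLinearMap.sum_apply, Pi.single_apply, Finset.sum_ite_eq',
    mul_comm]

@[simp] lemma Lz_y (p : Hspace n) (j : Fin n) :
    Lz n p ((0, Pi.single j 1, 0) : Hspace n) = 2 * p.2.1 j := by
  simp [Lz, ContinuousLinearMap.sum_apply, Pi.single_apply, Finset.sum_ite_eq',
    mul_comm]

@[simp] lemma Lz_t (p : Hspace n) :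
    Lz n p ((0, 0, 1) : Hspace n) = 0 := by
  simp [Lz, ContinuousLinearMap.sum_apply]

@[simp] lemma Lu_x (p : Hspace n) (j : Fin n) :
    Lu n p ((Pi.single j 1, 0, 0) : Hspace n) = 4 * zSq n p * p.1 j := by
  simp [Lu, Lz, ContinuousLinearMap.sum_apply, Pi.single_apply, Finset.sum_ite_eq',
    mul_comm]
  ring

@[simp] lemma Lu_y (p : Hspace n) (j : Fin n) :
    Lu n p ((0, Pi.single j 1, 0) : Hspace n) = 4 * zSq n p * p.2.1 j := by
  simp [Lu, Lz, ContinuousLinearMap.sum_apply, Pi.single_apply, Finset.sum_ite_eq',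
    mul_comm]
  ring

@[simp] lemma Lu_t (p : Hspace n) :
    Lu n p ((0, 0, 1) : Hspace n) = 2 * p.2.2 := by
  simp [Lu, Lz, ContinuousLinearMap.sum_apply]


lemma hasFDerivAt_rho {p : Hspace n} (hp : p ≠ 0) :
    HasFDerivAt (rho n) (((4:ℝ)⁻¹ * uu n p ^ ((4:ℝ)⁻¹ - 1)) • Lu n p) p := by
  have h := (hasFDerivAt_uu (n := n) p).rpow_const (p := (4:ℝ)⁻¹) (Or.inl (uu_pos hp).ne')
  exact h

lemma Xd_rho {p : Hspace n} (hp : p ≠ 0) (j : Fin n) :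
    Xd n j (rho n) p = uu n p ^ ((4:ℝ)⁻¹ - 1) * (zSq n p * p.1 j + p.2.1 j * p.2.2) := by
  rw [Xd, (hasFDerivAt_rho hp).fderiv]
  simp only [ContinuousLinearMap.coe_smul', Pi.smul_apply, smul_eq_mul, Lu_x, Lu_t]
  ring

lemma Yd_rho {p : Hspace n} (hp : p ≠ 0) (j : Fin n) :
    Yd n j (rho n) p = uu n p ^ ((4:ℝ)⁻¹ - 1) * (zSq n p * p.2.1 j - p.1 j * p.2.2) := by
  rw [Yd, (hasFDerivAt_rho hp).fderiv]
  simp only [ContinuousLinearMap.coe_smul', Pi.smul_apply, smul_eq_mul, Lu_y, Lu_t]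
  ring

lemma key_sum (p : Hspace n) :
    ∑ j : Fin n, ((zSq n p * p.1 j + p.2.1 j * p.2.2) ^ 2
        + (zSq n p * p.2.1 j - p.1 j * p.2.2) ^ 2)
      = uu n p * zSq n p := by
  have h : ∀ j : Fin n, (zSq n p * p.1 j + p.2.1 j * p.2.2) ^ 2
        + (zSq n p * p.2.1 j - p.1 j * p.2.2) ^ 2
      = (zSq n p ^ 2 + p.2.2 ^ 2) * ((p.1 j) ^ 2 + (p.2.1 j) ^ 2) := by
    intro j; ring
  rw [Finset.sum_congr rfl (fun j _ => h j), ← Finset.mul_sum]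
  rfl

lemma gradH2_rho {p : Hspace n} (hp : p ≠ 0) :
    gradH2 n (rho n) p = zSq n p * uu n p ^ (-(2:ℝ)⁻¹) := by
  have hu := uu_pos hp
  have h1 : gradH2 n (rho n) p
      = uu n p ^ ((4:ℝ)⁻¹ - 1) * uu n p ^ ((4:ℝ)⁻¹ - 1) * (uu n p * zSq n p) := by
    rw [gradH2]
    have h : ∀ j : Fin n, (Xd n j (rho n) p) ^ 2 + (Yd n j (rho n) p) ^ 2
        = uu n p ^ ((4:ℝ)⁻¹ - 1) * uu n p ^ ((4:ℝ)⁻¹ - 1) *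
          ((zSq n p * p.1 j + p.2.1 j * p.2.2) ^ 2
            + (zSq n p * p.2.1 j - p.1 j * p.2.2) ^ 2) := by
      intro j
      rw [Xd_rho hp j, Yd_rho hp j]; ring
    rw [Finset.sum_congr rfl (fun j _ => h j), ← Finset.mul_sum, key_sum]
  rw [h1]
  have h2 : uu n p ^ ((4:ℝ)⁻¹ - 1) * uu n p ^ ((4:ℝ)⁻¹ - 1) * uu n p
      = uu n p ^ (-(2:ℝ)⁻¹) := by
    rw [← Real.rpow_add hu, ← Real.rpow_add_one hu.ne']
    norm_num
  calc uu n p ^ ((4:ℝ)⁻¹ - 1) * uu n p ^ ((4:ℝ)⁻¹ - 1) * (uu n p * zSq n p)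
      = uu n p ^ ((4:ℝ)⁻¹ - 1) * uu n p ^ ((4:ℝ)⁻¹ - 1) * uu n p * zSq n p := by ring
    _ = zSq n p * uu n p ^ (-(2:ℝ)⁻¹) := by rw [h2]; ring

lemma hasFDerivAt_g {p : Hspace n} (hp : p ≠ 0) :
    HasFDerivAt (fun q : Hspace n => zSq n q * uu n q ^ (-(2:ℝ)⁻¹))
      (zSq n p • ((-(2:ℝ)⁻¹ * uu n p ^ (-(2:ℝ)⁻¹ - 1)) • Lu n p)
        + (uu n p ^ (-(2:ℝ)⁻¹)) • Lz n p) p :=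
  (hasFDerivAt_zSq p).mul ((hasFDerivAt_uu p).rpow_const (Or.inl (uu_pos hp).ne'))

lemma fderiv_gradH2_eq {p : Hspace n} (hp : p ≠ 0) :
    fderiv ℝ (gradH2 n (rho n)) p
      = fderiv ℝ (fun q : Hspace n => zSq n q * uu n q ^ (-(2:ℝ)⁻¹)) p := by
  apply Filter.EventuallyEq.fderiv_eq
  filter_upwards [IsOpen.mem_nhds isOpen_compl_singleton hp] with q hq
  exact gradH2_rho hq

lemma Xd_g {p : Hspace n} (hp : p ≠ 0) (j : Fin n) :
    Xd n j (gradH2 n (rho n)) p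
      = 2 * p.1 j * uu n p ^ (-(2:ℝ)⁻¹)
        - 2 * zSq n p * uu n p ^ (-(2:ℝ)⁻¹ - 1)
            * (zSq n p * p.1 j + p.2.1 j * p.2.2) := by
  rw [Xd, fderiv_gradH2_eq hp, (hasFDerivAt_g hp).fderiv]
  simp only [ContinuousLinearMap.add_apply, ContinuousLinearMap.coe_smul',
    Pi.smul_apply, smul_eq_mul, Lu_x, Lu_t, Lz_x, Lz_t]
  ring

lemma Yd_g {p : Hspace n} (hp : p ≠ 0) (j : Fin n) :
    Yd n j (gradH2 n (rho n)) p
      = 2 * p.2.1 j * uu n p ^ (-(2:ℝ)⁻¹)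
        - 2 * zSq n p * uu n p ^ (-(2:ℝ)⁻¹ - 1)
            * (zSq n p * p.2.1 j - p.1 j * p.2.2) := by
  rw [Yd, fderiv_gradH2_eq hp, (hasFDerivAt_g hp).fderiv]
  simp only [ContinuousLinearMap.add_apply, ContinuousLinearMap.coe_smul',
    Pi.smul_apply, smul_eq_mul, Lu_y, Lu_t, Lz_y, Lz_t]
  ring

end HRho

/-- the homogeneous norm `ρ` satisfies the ∞-sub-Laplace equation on
`ℝ^{2n+1} \ {0}`: `Σ_j [(X_j ρ)·X_j(|∇_ℍ ρ|²) + (Y_j ρ)·Y_j(|∇_ℍ ρ|²)] = 0`. -/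
theorem heisenberg_rho_infty_harmonic (n : ℕ) (hn : 1 ≤ n) (p : Hspace n) (hp : p ≠ 0) :
    ∑ j : Fin n,
      (Xd n j (rho n) p * Xd n j (gradH2 n (rho n)) p +
        Yd n j (rho n) p * Yd n j (gradH2 n (rho n)) p) = 0 := by
  have hu := HRho.uu_pos hp
  set Z := zSq n p with hZdef
  set T := p.2.2 with hTdef
  set E := HRho.uu n p ^ ((4:ℝ)⁻¹ - 1) with hE
  set U := HRho.uu n p ^ (-(2:ℝ)⁻¹) with hU
  set V := HRho.uu n p ^ (-(2:ℝ)⁻¹ - 1) with hV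
  have hstep : ∀ j : Fin n,
      Xd n j (rho n) p * Xd n j (gradH2 n (rho n)) p +
        Yd n j (rho n) p * Yd n j (gradH2 n (rho n)) p
      = 2 * E * U * (Z * ((p.1 j) ^ 2 + (p.2.1 j) ^ 2))
        - 2 * E * Z * V * ((Z * p.1 j + p.2.1 j * T) ^ 2
            + (Z * p.2.1 j - p.1 j * T) ^ 2) := by
    intro j
    rw [HRho.Xd_rho hp j, HRho.Yd_rho hp j, HRho.Xd_g hp j, HRho.Yd_g hp j]
    ring
  rw [Finset.sum_congr rfl (fun j _ => hstep j), Finset.sum_sub_distrib,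
    ← Finset.mul_sum, ← Finset.mul_sum, ← Finset.mul_sum, HRho.key_sum]
  have hZZ : (∑ j : Fin n, ((p.1 j) ^ 2 + (p.2.1 j) ^ 2)) = Z := rfl
  rw [hZZ]
  have hVU : V * HRho.uu n p = U := by
    rw [hV, hU, ← Real.rpow_add_one hu.ne']
    norm_num
  linear_combination (-(2) * E * Z * Z) * hVU
end
end

section
/- Let n ≥ 1 and let Q = 2n + 2. Then for every real-valued φ ∈ C_c^∞(ℝ^{2n+1} \ {0}), the uncertainty principle inequality holds: ( ∫_{ℝ^{2n+1}} (ρ⁴/|z|²) φ² dz dt ) · ( ∫_{ℝ^{2n+1}} |∇_ℍ φ|² dz dt ) ≥ ((Q − 2)/2)² ( ∫_{ℝ^{2n+1}} φ² dz dt )². -/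
open MeasureTheory Real

noncomputable section

/-! ### Auxiliary material for the uncertainty principle -/

instance (n : ℕ) : Measure.IsAddHaarMeasure (volume : Measure ((Fin n → ℝ) × ℝ)) :=
  Measure.prod.instIsAddHaarMeasure _ _

instance (n : ℕ) : Measure.IsAddHaarMeasure (volume : Measure (Hspace n)) :=
  Measure.prod.instIsAddHaarMeasure _ _

namespace HUP

variable {n : ℕ}

/-- Integral of a directional derivative of a smooth compactly supported function vanishes. -/
theorem integral_fderiv_eq_zero (g : Hspace n → ℝ) (hg : ContDiff ℝ (⊤ : ℕ∞) g)
    (hc : HasCompactSupport g) (v : Hspace n) : ∫ p, fderiv ℝ g p v = 0 := by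
  obtain ⟨C, hC⟩ := ContDiff.lipschitzWith_of_hasCompactSupport hc hg (by simp)
  have h := LipschitzWith.integral_lineDeriv_mul_eq (μ := volume)
    (LipschitzWith.const (1 : ℝ)) hC hc (-v)
  have h1 : ∀ x : Hspace n, lineDeriv ℝ (fun _ => (1:ℝ)) x (-v) = 0 := by
    intro x; simp [lineDeriv]
  have h2 : ∀ x : Hspace n, lineDeriv ℝ g x (- -v) = fderiv ℝ g x v := by
    intro x
    rw [(hg.differentiable (by simp) x).lineDeriv_eq_fderiv]
    simp
  simp only [h1, zero_mul, integral_zero, h2, mul_one] at h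
  exact h.symm

def e1 (n : ℕ) (j : Fin n) : Hspace n := (Pi.single j 1, 0, 0)
def e2 (n : ℕ) (j : Fin n) : Hspace n := (0, Pi.single j 1, 0)
def e3 (n : ℕ) : Hspace n := (0, 0, 1)

def Lx (n : ℕ) (j : Fin n) : Hspace n →L[ℝ] ℝ :=
  (ContinuousLinearMap.proj j).comp (ContinuousLinearMap.fst ℝ (Fin n → ℝ) ((Fin n → ℝ) × ℝ))

def Ly (n : ℕ) (j : Fin n) : Hspace n →L[ℝ] ℝ :=
  (ContinuousLinearMap.proj j).comp
    ((ContinuousLinearMap.fst ℝ (Fin n → ℝ) ℝ).comp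
      (ContinuousLinearMap.snd ℝ (Fin n → ℝ) ((Fin n → ℝ) × ℝ)))

@[simp] lemma Lx_apply (j : Fin n) (p : Hspace n) : Lx n j p = p.1 j := rfl
@[simp] lemma Ly_apply (j : Fin n) (p : Hspace n) : Ly n j p = p.2.1 j := rfl

lemma Lx_e1 (j : Fin n) : Lx n j (e1 n j) = 1 := by simp [e1]
lemma Ly_e2 (j : Fin n) : Ly n j (e2 n j) = 1 := by simp [e2]

/-- Product rule against a continuous linear functional. -/
lemma fderiv_clm_mul (L : Hspace n →L[ℝ] ℝ) (g : Hspace n → ℝ) (hg : ContDiff ℝ (⊤ : ℕ∞) g)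
    (p v : Hspace n) :
    fderiv ℝ (fun q => L q * g q) p v = L p * fderiv ℝ g p v + g p * L v := by
  rw [fderiv_fun_mul (L.differentiable.differentiableAt) ((hg.differentiable (by simp)) p)]
  simp [ContinuousLinearMap.fderiv]

lemma ibp_coord (g : Hspace n → ℝ) (hg : ContDiff ℝ (⊤ : ℕ∞) g) (hc : HasCompactSupport g)
    (L : Hspace n →L[ℝ] ℝ) (v : Hspace n) (hLv : L v = 1) :
    ∫ p, (L p * fderiv ℝ g p v + g p) = 0 := by
  have hsm : ContDiff ℝ (⊤ : ℕ∞) (fun q => L q * g q) := (L.contDiff).mul hg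
  have hcs : HasCompactSupport (fun q => L q * g q) := HasCompactSupport.mul_left hc
  have h := integral_fderiv_eq_zero _ hsm hcs v
  have heq : (fun p => fderiv ℝ (fun q => L q * g q) p v) =
      fun p => L p * fderiv ℝ g p v + g p := by
    funext p
    rw [fderiv_clm_mul L g hg p v, hLv, mul_one]
  rwa [heq] at h

/-- The radial pairing `z · ∇_ℍ φ`. -/
def W (n : ℕ) (φ : Hspace n → ℝ) (p : Hspace n) : ℝ :=
  ∑ j : Fin n, (p.1 j * Xd n j φ p + p.2.1 j * Yd n j φ p)

lemma continuous_dfe (φ : Hspace n → ℝ) (hφ : ContDiff ℝ (⊤ : ℕ∞) φ) (v : Hspace n) :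
    Continuous fun p => fderiv ℝ φ p v :=
  (hφ.continuous_fderiv (by simp)).clm_apply continuous_const

lemma hcs_dfe (φ : Hspace n → ℝ) (hc : HasCompactSupport φ) (v : Hspace n) :
    HasCompactSupport fun p => fderiv ℝ φ p v :=
  (HasCompactSupport.fderiv ℝ hc).comp_left (g := fun L : Hspace n →L[ℝ] ℝ => L v) rfl

lemma continuous_W (φ : Hspace n → ℝ) (hφ : ContDiff ℝ (⊤ : ℕ∞) φ) : Continuous (W n φ) := by
  unfold W Xd Yd
  apply continuous_finset_sum
  intro j _
  have h1 := continuous_dfe φ hφ (Pi.single j 1, 0, 0)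
  have h2 := continuous_dfe φ hφ (0, Pi.single j 1, 0)
  have h3 := continuous_dfe φ hφ (0, 0, 1)
  have hx : Continuous fun p : Hspace n => p.1 j := (continuous_apply j).comp continuous_fst
  have hy : Continuous fun p : Hspace n => p.2.1 j :=
    (continuous_apply j).comp (continuous_fst.comp continuous_snd)
  fun_prop

/-- Main integration by parts identity: `∫ φ (z·∇_ℍ φ) = -n ∫ φ²`. -/
theorem ibp_main (φ : Hspace n → ℝ) (hφ : ContDiff ℝ (⊤ : ℕ∞) φ) (hc : HasCompactSupport φ) :
    ∫ p, φ p * W n φ p = -(n : ℝ) * ∫ p, φ p ^ 2 := by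
  set g : Hspace n → ℝ := fun q => φ q ^ 2 with hgdef
  have hg : ContDiff ℝ (⊤ : ℕ∞) g := hφ.pow 2
  have hgc : HasCompactSupport g := by
    have h := HasCompactSupport.mul_left (f := φ) hc
    rwa [show φ * φ = g from funext fun q => (sq (φ q)).symm] at h
  have hfg : ∀ p v, fderiv ℝ g p v = 2 * φ p * fderiv ℝ φ p v := by
    intro p v
    have hd := (hφ.differentiable (by simp)) p
    have : fderiv ℝ (fun q => φ q * φ q) p = φ p • fderiv ℝ φ p + φ p • fderiv ℝ φ p :=
      fderiv_fun_mul hd hd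
    have hgg : g = fun q => φ q * φ q := funext fun q => sq (φ q)
    rw [hgg, this]
    simp; ring
  -- integrability of the pieces
  have hint : ∀ (L : Hspace n →L[ℝ] ℝ) (v : Hspace n),
      Integrable (fun p => L p * fderiv ℝ g p v + g p) := by
    intro L v
    apply Continuous.integrable_of_hasCompactSupport
    · exact (L.continuous.mul (continuous_dfe g hg v)).add (hg.continuous)
    · exact ((hcs_dfe g hgc v).mul_left).add hgc
  -- per-coordinate IBP, summed
  have hx : ∀ j : Fin n, ∫ p, (p.1 j * fderiv ℝ g p (e1 n j) + g p) = 0 := fun j =>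
    ibp_coord g hg hgc (Lx n j) (e1 n j) (Lx_e1 j)
  have hy : ∀ j : Fin n, ∫ p, (p.2.1 j * fderiv ℝ g p (e2 n j) + g p) = 0 := fun j =>
    ibp_coord g hg hgc (Ly n j) (e2 n j) (Ly_e2 j)
  have hintx : ∀ j : Fin n, Integrable (fun p : Hspace n => p.1 j * fderiv ℝ g p (e1 n j) + g p) :=
    fun j => hint (Lx n j) (e1 n j)
  have hinty : ∀ j : Fin n, Integrable (fun p : Hspace n => p.2.1 j * fderiv ℝ g p (e2 n j) + g p) :=
    fun j => hint (Ly n j) (e2 n j)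
  have hsum : ∫ p, ∑ j : Fin n,
      ((p.1 j * fderiv ℝ g p (e1 n j) + g p) + (p.2.1 j * fderiv ℝ g p (e2 n j) + g p)) = 0 := by
    rw [integral_finset_sum]
    · refine Finset.sum_eq_zero fun j _ => ?_
      rw [integral_add (hintx j) (hinty j), hx j, hy j, add_zero]
    · intro j _
      exact (hintx j).add (hinty j)
  -- identify the integrand
  have hiden : ∀ p : Hspace n, (∑ j : Fin n,
      ((p.1 j * fderiv ℝ g p (e1 n j) + g p) + (p.2.1 j * fderiv ℝ g p (e2 n j) + g p))) =
      2 * (φ p * W n φ p) + 2 * (n : ℝ) * g p := by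
    intro p
    have hterm : ∀ j : Fin n,
        (p.1 j * fderiv ℝ g p (e1 n j) + g p) + (p.2.1 j * fderiv ℝ g p (e2 n j) + g p) =
        2 * (φ p * (p.1 j * Xd n j φ p + p.2.1 j * Yd n j φ p)) + 2 * g p := by
      intro j
      rw [hfg p (e1 n j), hfg p (e2 n j)]
      show p.1 j * (2 * φ p * fderiv ℝ φ p (Pi.single j 1, 0, 0)) + g p +
        (p.2.1 j * (2 * φ p * fderiv ℝ φ p (0, Pi.single j 1, 0)) + g p) = _
      unfold Xd Yd
      ring
    calc (∑ j : Fin n,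
        ((p.1 j * fderiv ℝ g p (e1 n j) + g p) + (p.2.1 j * fderiv ℝ g p (e2 n j) + g p)))
        = ∑ j : Fin n, (2 * (φ p * (p.1 j * Xd n j φ p + p.2.1 j * Yd n j φ p)) + 2 * g p) :=
          Finset.sum_congr rfl fun j _ => hterm j
      _ = 2 * (φ p * W n φ p) + 2 * (n : ℝ) * g p := by
          rw [Finset.sum_add_distrib, Finset.sum_const, Finset.card_univ, Fintype.card_fin,
            nsmul_eq_mul]
          have hws : (∑ j : Fin n,
              2 * (φ p * (p.1 j * Xd n j φ p + p.2.1 j * Yd n j φ p))) =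
              2 * (φ p * W n φ p) := by
            unfold W
            rw [Finset.mul_sum, Finset.mul_sum]
          rw [hws]
          ring
  have hWint : Integrable (fun p => φ p * W n φ p) := by
    apply Continuous.integrable_of_hasCompactSupport
    · exact hφ.continuous.mul (continuous_W φ hφ)
    · exact hc.mul_right
  have hgint : Integrable g := hg.continuous.integrable_of_hasCompactSupport hgc
  rw [funext hiden] at hsum
  rw [integral_add ((hWint.const_mul 2)) (hgint.const_mul _), integral_const_mul,
    integral_const_mul] at hsum
  have : (2 : ℝ) ≠ 0 := two_ne_zero
  field_simp at hsum ⊢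
  linarith [hsum]

lemma rho_pow4 (p : Hspace n) : rho n p ^ 4 = zSq n p ^ 2 + p.2.2 ^ 2 := by
  unfold rho
  rw [← Real.rpow_natCast ((zSq n p ^ 2 + p.2.2 ^ 2) ^ ((4:ℝ)⁻¹)) 4,
    ← Real.rpow_mul (by positivity)]
  norm_num

lemma zSq_nonneg (p : Hspace n) : 0 ≤ zSq n p := by
  unfold zSq; positivity

lemma gradH2_nonneg (φ : Hspace n → ℝ) (p : Hspace n) : 0 ≤ gradH2 n φ p := by
  unfold gradH2; positivity

lemma rho4_nonneg (p : Hspace n) : 0 ≤ rho n p ^ 4 := by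
  rw [rho_pow4]; positivity

lemma continuous_gradH2 (φ : Hspace n → ℝ) (hφ : ContDiff ℝ (⊤ : ℕ∞) φ) :
    Continuous (gradH2 n φ) := by
  unfold gradH2 Xd Yd
  apply continuous_finset_sum
  intro j _
  have h1 := continuous_dfe φ hφ ((Pi.single j 1 : Fin n → ℝ), 0, 0)
  have h2 := continuous_dfe φ hφ (0, (Pi.single j 1 : Fin n → ℝ), 0)
  have h3 := continuous_dfe φ hφ (0, 0, 1)
  have hx : Continuous fun p : Hspace n => p.1 j := (continuous_apply j).comp continuous_fst
  have hy : Continuous fun p : Hspace n => p.2.1 j :=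
    (continuous_apply j).comp (continuous_fst.comp continuous_snd)
  fun_prop

/-- Pointwise Cauchy–Schwarz: `(φ (z·∇_ℍφ))² ≤ ((ρ⁴/|z|²) φ²) |∇_ℍφ|²`. -/
lemma pointwise_cs (φ : Hspace n → ℝ) (p : Hspace n) :
    (φ p * W n φ p) ^ 2 ≤ ((rho n p ^ 4 / zSq n p) * φ p ^ 2) * gradH2 n φ p := by
  have hW : (W n φ p) ^ 2 ≤ zSq n p * gradH2 n φ p := by
    have h := Finset.sum_mul_sq_le_sq_mul_sq (Finset.univ : Finset (Fin n × Bool))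
      (fun jb => cond jb.2 (p.1 jb.1) (p.2.1 jb.1))
      (fun jb => cond jb.2 (Xd n jb.1 φ p) (Yd n jb.1 φ p))
    rw [Fintype.sum_prod_type, Fintype.sum_prod_type, Fintype.sum_prod_type] at h
    simp only [Fintype.sum_bool, Bool.cond_true, Bool.cond_false] at h
    calc (W n φ p) ^ 2
        = (∑ j : Fin n, (p.1 j * Xd n j φ p + p.2.1 j * Yd n j φ p)) ^ 2 := rfl
      _ ≤ (∑ j : Fin n, (p.1 j ^ 2 + p.2.1 j ^ 2)) *
            (∑ j : Fin n, (Xd n j φ p ^ 2 + Yd n j φ p ^ 2)) := h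
      _ = zSq n p * gradH2 n φ p := rfl
  have hz : zSq n p * φ p ^ 2 ≤ (rho n p ^ 4 / zSq n p) * φ p ^ 2 := by
    rcases eq_or_lt_of_le (zSq_nonneg p) with h0 | h0
    · rw [← h0]
      simp
    · refine mul_le_mul_of_nonneg_right ?_ (sq_nonneg _)
      rw [le_div_iff₀ h0]
      have h4 := rho_pow4 (n := n) p
      nlinarith [sq_nonneg p.2.2]
  calc (φ p * W n φ p) ^ 2 = φ p ^ 2 * (W n φ p) ^ 2 := by ring
    _ ≤ φ p ^ 2 * (zSq n p * gradH2 n φ p) :=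
        mul_le_mul_of_nonneg_left hW (sq_nonneg _)
    _ = (zSq n p * φ p ^ 2) * gradH2 n φ p := by ring
    _ ≤ ((rho n p ^ 4 / zSq n p) * φ p ^ 2) * gradH2 n φ p :=
        mul_le_mul_of_nonneg_right hz (gradH2_nonneg φ p)

end HUP

/-- uncertainty principle inequality on ℍⁿ:
`(∫ (ρ⁴/|z|²) φ²) · (∫ |∇_ℍ φ|²) ≥ ((Q − 2)/2)² (∫ φ²)²`. -/
theorem heisenberg_uncertainty (n : ℕ) (hn : 1 ≤ n) (Q : ℝ) (hQ : Q = 2 * n + 2)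
    (φ : Hspace n → ℝ) (hφ : ContDiff ℝ (⊤ : ℕ∞) φ) (hcs : HasCompactSupport φ)
    (h0 : (0 : Hspace n) ∉ tsupport φ) :
    (∫⁻ p, ENNReal.ofReal ((rho n p ^ 4 / zSq n p) * (φ p) ^ 2)) *
        (∫⁻ p, ENNReal.ofReal (gradH2 n φ p)) ≥
      ENNReal.ofReal (((Q - 2) / 2) ^ 2) *
        (∫⁻ p, ENNReal.ofReal ((φ p) ^ 2)) ^ 2 := by
  classical
  have hQn : ((Q - 2) / 2) ^ 2 = ((n : ℝ)) ^ 2 := by rw [hQ]; ring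
  set a : Hspace n → ℝ := fun p => (rho n p ^ 4 / zSq n p) * φ p ^ 2 with ha
  set b : Hspace n → ℝ := gradH2 n φ with hb
  set A := ∫⁻ p, ENNReal.ofReal (a p) with hA
  set B := ∫⁻ p, ENNReal.ofReal (b p) with hB
  -- continuity / measurability
  have hzSq_cont : Continuous (zSq n) := by
    unfold zSq
    apply continuous_finset_sum
    intro j _
    have hx : Continuous fun p : Hspace n => p.1 j := (continuous_apply j).comp continuous_fst
    have hy : Continuous fun p : Hspace n => p.2.1 j :=
      (continuous_apply j).comp (continuous_fst.comp continuous_snd)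
    fun_prop
  have hrho4_cont : Continuous fun p => rho n p ^ 4 := by
    have : Continuous fun p : Hspace n => zSq n p ^ 2 + p.2.2 ^ 2 := by fun_prop
    have hc : Continuous (rho n) := by
      unfold rho
      exact this.rpow_const fun x => Or.inr (by norm_num)
    fun_prop
  have ha_meas : Measurable fun p => ENNReal.ofReal (a p) :=
    (((hrho4_cont.measurable).div hzSq_cont.measurable).mul
      ((hφ.continuous.pow 2).measurable)).ennreal_ofReal
  have hb_cont : Continuous b := HUP.continuous_gradH2 φ hφ
  have hb_meas : Measurable fun p => ENNReal.ofReal (b p) :=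
    hb_cont.measurable.ennreal_ofReal
  -- real integrability
  have hsq_cs : HasCompactSupport fun p => φ p ^ 2 := by
    have h := HasCompactSupport.mul_left (f := φ) hcs
    rwa [show φ * φ = (fun p => φ p ^ 2) from funext fun q => (sq (φ q)).symm] at h
  have hcint : Integrable (fun p => φ p ^ 2) :=
    (hφ.continuous.pow 2).integrable_of_hasCompactSupport hsq_cs
  have hWint : Integrable (fun p => φ p * HUP.W n φ p) := by
    apply Continuous.integrable_of_hasCompactSupport
    · exact hφ.continuous.mul (HUP.continuous_W φ hφ)
    · exact hcs.mul_right
  have h_ibp := HUP.ibp_main φ hφ hcs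
  set I := ∫ p, φ p ^ 2 with hI
  have hI0 : 0 ≤ I := integral_nonneg fun p => sq_nonneg _
  have hCeq : (∫⁻ p, ENNReal.ofReal (φ p ^ 2)) = ENNReal.ofReal I :=
    (ofReal_integral_eq_lintegral_ofReal hcint (Filter.Eventually.of_forall fun p => sq_nonneg _)).symm
  -- Hölder
  set F : Hspace n → ENNReal := fun p => (ENNReal.ofReal (a p)) ^ ((2:ℝ)⁻¹) with hF
  set G : Hspace n → ENNReal := fun p => (ENNReal.ofReal (b p)) ^ ((2:ℝ)⁻¹) with hG
  have hFm : AEMeasurable F :=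
    ((ENNReal.continuous_rpow_const.measurable).comp ha_meas).aemeasurable
  have hGm : AEMeasurable G :=
    ((ENNReal.continuous_rpow_const.measurable).comp hb_meas).aemeasurable
  have hpq : Real.HolderConjugate 2 2 := by constructor <;> norm_num
  have hH := ENNReal.lintegral_mul_le_Lp_mul_Lq volume hpq hFm hGm
  have hF2 : ∀ p, F p ^ (2:ℝ) = ENNReal.ofReal (a p) := by
    intro p
    rw [hF, ← ENNReal.rpow_mul]
    norm_num
  have hG2 : ∀ p, G p ^ (2:ℝ) = ENNReal.ofReal (b p) := by
    intro p
    rw [hG, ← ENNReal.rpow_mul]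
    norm_num
  simp only [Pi.mul_apply] at hH
  have hH' : ∫⁻ p, F p * G p ≤ A ^ (1/(2:ℝ)) * B ^ (1/(2:ℝ)) := by
    calc ∫⁻ p, F p * G p ≤ (∫⁻ p, F p ^ (2:ℝ)) ^ (1/(2:ℝ)) * (∫⁻ p, G p ^ (2:ℝ)) ^ (1/(2:ℝ)) := hH
      _ = A ^ (1/(2:ℝ)) * B ^ (1/(2:ℝ)) := by
          simp only [hF2, hG2]
          rfl
  -- pointwise bound
  have hpt : ∀ p, ENNReal.ofReal |φ p * HUP.W n φ p| ≤ F p * G p := by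
    intro p
    have h2 := HUP.pointwise_cs φ p
    have ha0 : 0 ≤ a p := by
      rw [ha]
      have := HUP.rho4_nonneg (n := n) p
      have := HUP.zSq_nonneg (n := n) p
      positivity
    have habs : ENNReal.ofReal |φ p * HUP.W n φ p| =
        (ENNReal.ofReal ((φ p * HUP.W n φ p) ^ 2)) ^ ((2:ℝ)⁻¹) := by
      rw [← sq_abs, ENNReal.ofReal_pow (abs_nonneg _), ← ENNReal.rpow_natCast, ← ENNReal.rpow_mul]
      norm_num
    rw [habs]
    calc (ENNReal.ofReal ((φ p * HUP.W n φ p) ^ 2)) ^ ((2:ℝ)⁻¹)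
        ≤ (ENNReal.ofReal (a p * b p)) ^ ((2:ℝ)⁻¹) :=
          ENNReal.rpow_le_rpow (ENNReal.ofReal_le_ofReal h2) (by norm_num)
      _ = (ENNReal.ofReal (a p) * ENNReal.ofReal (b p)) ^ ((2:ℝ)⁻¹) := by
          rw [ENNReal.ofReal_mul ha0]
      _ = F p * G p := ENNReal.mul_rpow_of_nonneg _ _ (by norm_num)
  -- chain of inequalities
  have chain : ENNReal.ofReal (∫ p, |φ p * HUP.W n φ p|) ≤ A ^ (1/(2:ℝ)) * B ^ (1/(2:ℝ)) := by
    rw [ofReal_integral_eq_lintegral_ofReal hWint.abs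
      (Filter.Eventually.of_forall fun p => abs_nonneg _)]
    exact le_trans (lintegral_mono fun p => hpt p) hH'
  -- final assembly
  rw [ge_iff_le, hQn, hCeq]
  have hRHS : ENNReal.ofReal ((n:ℝ) ^ 2) * ENNReal.ofReal I ^ 2 =
      ENNReal.ofReal (((n:ℝ) * I) ^ 2) := by
    rw [← ENNReal.ofReal_pow hI0, ← ENNReal.ofReal_mul (by positivity)]
    congr 1
    ring
  rw [hRHS]
  have hsq : ((n:ℝ) * I) ^ 2 ≤ (∫ p, |φ p * HUP.W n φ p|) ^ 2 := by
    have h1 : ((n:ℝ) * I) ^ 2 = (∫ p, φ p * HUP.W n φ p) ^ 2 := by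
      rw [h_ibp]; ring
    rw [h1, ← sq_abs (∫ p, φ p * HUP.W n φ p)]
    have h2 : |∫ p, φ p * HUP.W n φ p| ≤ ∫ p, |φ p * HUP.W n φ p| := by
      have := norm_integral_le_integral_norm (μ := volume) (fun p => φ p * HUP.W n φ p)
      simpa only [Real.norm_eq_abs] using this
    exact pow_le_pow_left₀ (abs_nonneg _) h2 2
  calc ENNReal.ofReal (((n:ℝ) * I) ^ 2)
      ≤ ENNReal.ofReal ((∫ p, |φ p * HUP.W n φ p|) ^ 2) := ENNReal.ofReal_le_ofReal hsq
    _ = (ENNReal.ofReal (∫ p, |φ p * HUP.W n φ p|)) ^ 2 := by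
        rw [ENNReal.ofReal_pow (integral_nonneg fun p => abs_nonneg _)]
    _ ≤ (A ^ (1/(2:ℝ)) * B ^ (1/(2:ℝ))) ^ 2 := pow_le_pow_left₀ (by simp) chain 2
    _ = A * B := by
        rw [mul_pow, ← ENNReal.rpow_natCast (A ^ (1/(2:ℝ))) 2, ← ENNReal.rpow_natCast (B ^ (1/(2:ℝ))) 2,
          ← ENNReal.rpow_mul, ← ENNReal.rpow_mul]
        norm_num
end
end

section
/- Let n ≥ 1 and let Q = 2n + 2. Then for every real-valued φ ∈ C_c^∞(ℝ^{2n+1} \ {0}), ( ∫_{ℝ^{2n+1}} |z|² φ² dz dt ) · ( ∫_{ℝ^{2n+1}} |∇_ℍ φ|² dz dt ) ≥ ((Q − 2)/2)² ( ∫_{ℝ^{2n+1}} (|z|²/ρ²) φ² dz dt )². -/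
open MeasureTheory Real

noncomputable section

/-! ### Auxiliary material -/

instance hs_haar (n : ℕ) : (volume : Measure (Hspace n)).IsAddHaarMeasure := by
  rw [Measure.volume_eq_prod]
  have : (volume : Measure ((Fin n → ℝ) × ℝ)).IsAddHaarMeasure := by
    rw [Measure.volume_eq_prod]; exact Measure.prod.instIsAddHaarMeasure _ _
  exact Measure.prod.instIsAddHaarMeasure _ _

def cx (n : ℕ) (j : Fin n) : Hspace n →L[ℝ] ℝ :=
  (ContinuousLinearMap.proj j).comp (ContinuousLinearMap.fst ℝ (Fin n → ℝ) ((Fin n → ℝ) × ℝ))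

def cy (n : ℕ) (j : Fin n) : Hspace n →L[ℝ] ℝ :=
  (ContinuousLinearMap.proj j).comp ((ContinuousLinearMap.fst ℝ (Fin n → ℝ) ℝ).comp
    (ContinuousLinearMap.snd ℝ (Fin n → ℝ) ((Fin n → ℝ) × ℝ)))

lemma fderiv_cx (n : ℕ) (j : Fin n) (p : Hspace n) :
    fderiv ℝ (fun q : Hspace n => q.1 j) p = cx n j := (cx n j).fderiv

lemma fderiv_cy (n : ℕ) (j : Fin n) (p : Hspace n) :
    fderiv ℝ (fun q : Hspace n => q.2.1 j) p = cy n j := (cy n j).fderiv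

/-- Integration by parts: the integral of `X_j w` vanishes for compactly supported `C¹` `w`. -/
lemma int_Xd_eq_zero (n : ℕ) (j : Fin n) (w : Hspace n → ℝ)
    (hw : ContDiff ℝ 1 w) (hc : HasCompactSupport w) :
    ∫ p : Hspace n, Xd n j w p = 0 := by
  have hwd : Differentiable ℝ w := hw.differentiable (by simp)
  have hdc : Continuous (fderiv ℝ w) := hw.continuous_fderiv (by simp)
  have hA : Continuous (fun p : Hspace n => fderiv ℝ w p (Pi.single j 1, 0, 0)) :=
    (ContinuousLinearMap.apply ℝ ℝ ((Pi.single j 1, 0, 0) : Hspace n)).continuous.comp hdc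
  have hB : Continuous (fun p : Hspace n => fderiv ℝ w p (0, 0, 1)) :=
    (ContinuousLinearMap.apply ℝ ℝ ((0, 0, 1) : Hspace n)).continuous.comp hdc
  have hAi : Integrable (fun p : Hspace n => fderiv ℝ w p (Pi.single j 1, 0, 0)) :=
    hA.integrable_of_hasCompactSupport (hc.fderiv_apply ℝ _)
  have hBi : Integrable (fun p : Hspace n => 2 * p.2.1 j * fderiv ℝ w p (0, 0, 1)) := by
    apply Continuous.integrable_of_hasCompactSupport
    · exact (continuous_const.mul ((continuous_apply j).comp
        (continuous_fst.comp continuous_snd))).mul hB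
    · exact ((hc.fderiv_apply ℝ _).mul_left)
  have h1 : ∫ p : Hspace n, fderiv ℝ w p (Pi.single j 1, 0, 0) = 0 := by
    have := integral_mul_fderiv_eq_neg_fderiv_mul_of_integrable (μ := volume)
      (f := fun _ : Hspace n => (1:ℝ)) (g := w) (v := (Pi.single j 1, 0, 0))
      (by simp) (by simpa using hAi)
      (by simpa using hw.continuous.integrable_of_hasCompactSupport hc)
      (fun x _ => differentiable_const (1:ℝ) x) (fun x _ => hwd x)
    simpa using this
  have h2 : ∫ p : Hspace n, 2 * p.2.1 j * fderiv ℝ w p (0, 0, 1) = 0 := by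
    have key := integral_mul_fderiv_eq_neg_fderiv_mul_of_integrable (μ := volume)
      (f := fun p : Hspace n => p.2.1 j) (g := w) (v := (0, 0, 1))
      ?_ ?_ ?_ (fun x _ => (cy n j).differentiable x) (fun x _ => hwd x)
    · have : ∫ p : Hspace n, p.2.1 j * fderiv ℝ w p (0, 0, 1) = 0 := by
        rw [key]
        simp only [fderiv_cy]
        norm_num [cy]
      calc ∫ p : Hspace n, 2 * p.2.1 j * fderiv ℝ w p (0, 0, 1)
          = 2 * ∫ p : Hspace n, p.2.1 j * fderiv ℝ w p (0, 0, 1) := by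
            rw [← integral_const_mul]; congr 1; ext p; ring
        _ = 0 := by rw [this]; ring
    · simp only [fderiv_cy]
      norm_num [cy]
    · apply Continuous.integrable_of_hasCompactSupport
      · exact ((continuous_apply j).comp (continuous_fst.comp continuous_snd)).mul hB
      · exact (hc.fderiv_apply ℝ _).mul_left
    · apply Continuous.integrable_of_hasCompactSupport
      · exact ((continuous_apply j).comp (continuous_fst.comp continuous_snd)).mul hw.continuous
      · exact hc.mul_left
  unfold Xd
  rw [integral_add hAi hBi, h1, h2, add_zero]

/-- Integration by parts: the integral of `Y_j w` vanishes for compactly supported `C¹` `w`. -/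
lemma int_Yd_eq_zero (n : ℕ) (j : Fin n) (w : Hspace n → ℝ)
    (hw : ContDiff ℝ 1 w) (hc : HasCompactSupport w) :
    ∫ p : Hspace n, Yd n j w p = 0 := by
  have hwd : Differentiable ℝ w := hw.differentiable (by simp)
  have hdc : Continuous (fderiv ℝ w) := hw.continuous_fderiv (by simp)
  have hA : Continuous (fun p : Hspace n => fderiv ℝ w p (0, Pi.single j 1, 0)) :=
    (ContinuousLinearMap.apply ℝ ℝ ((0, Pi.single j 1, 0) : Hspace n)).continuous.comp hdc
  have hB : Continuous (fun p : Hspace n => fderiv ℝ w p (0, 0, 1)) :=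
    (ContinuousLinearMap.apply ℝ ℝ ((0, 0, 1) : Hspace n)).continuous.comp hdc
  have hAi : Integrable (fun p : Hspace n => fderiv ℝ w p (0, Pi.single j 1, 0)) :=
    hA.integrable_of_hasCompactSupport (hc.fderiv_apply ℝ _)
  have hBi : Integrable (fun p : Hspace n => 2 * p.1 j * fderiv ℝ w p (0, 0, 1)) := by
    apply Continuous.integrable_of_hasCompactSupport
    · exact (continuous_const.mul ((continuous_apply j).comp continuous_fst)).mul hB
    · exact ((hc.fderiv_apply ℝ _).mul_left)
  have h1 : ∫ p : Hspace n, fderiv ℝ w p (0, Pi.single j 1, 0) = 0 := by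
    have := integral_mul_fderiv_eq_neg_fderiv_mul_of_integrable (μ := volume)
      (f := fun _ : Hspace n => (1:ℝ)) (g := w) (v := (0, Pi.single j 1, 0))
      (by simp) (by simpa using hAi)
      (by simpa using hw.continuous.integrable_of_hasCompactSupport hc)
      (fun x _ => differentiable_const (1:ℝ) x) (fun x _ => hwd x)
    simpa using this
  have h2 : ∫ p : Hspace n, 2 * p.1 j * fderiv ℝ w p (0, 0, 1) = 0 := by
    have key := integral_mul_fderiv_eq_neg_fderiv_mul_of_integrable (μ := volume)
      (f := fun p : Hspace n => p.1 j) (g := w) (v := (0, 0, 1))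
      ?_ ?_ ?_ (fun x _ => (cx n j).differentiable x) (fun x _ => hwd x)
    · have : ∫ p : Hspace n, p.1 j * fderiv ℝ w p (0, 0, 1) = 0 := by
        rw [key]
        simp only [fderiv_cx]
        norm_num [cx]
      calc ∫ p : Hspace n, 2 * p.1 j * fderiv ℝ w p (0, 0, 1)
          = 2 * ∫ p : Hspace n, p.1 j * fderiv ℝ w p (0, 0, 1) := by
            rw [← integral_const_mul]; congr 1; ext p; ring
        _ = 0 := by rw [this]; ring
    · simp only [fderiv_cx]
      norm_num [cx]
    · apply Continuous.integrable_of_hasCompactSupport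
      · exact ((continuous_apply j).comp continuous_fst).mul hB
      · exact (hc.fderiv_apply ℝ _).mul_left
    · apply Continuous.integrable_of_hasCompactSupport
      · exact ((continuous_apply j).comp continuous_fst).mul hw.continuous
      · exact hc.mul_left
  unfold Yd
  rw [integral_sub hAi hBi, h1, h2, sub_zero]

lemma Xd_mul (n : ℕ) (j : Fin n) (u v : Hspace n → ℝ) (p : Hspace n)
    (hu : DifferentiableAt ℝ u p) (hv : DifferentiableAt ℝ v p) :
    Xd n j (fun q => u q * v q) p = Xd n j u p * v p + u p * Xd n j v p := by
  unfold Xd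
  rw [fderiv_fun_mul hu hv]
  simp only [ContinuousLinearMap.add_apply, ContinuousLinearMap.coe_smul',
    Pi.smul_apply, smul_eq_mul]
  ring

lemma Yd_mul (n : ℕ) (j : Fin n) (u v : Hspace n → ℝ) (p : Hspace n)
    (hu : DifferentiableAt ℝ u p) (hv : DifferentiableAt ℝ v p) :
    Yd n j (fun q => u q * v q) p = Yd n j u p * v p + u p * Yd n j v p := by
  unfold Yd
  rw [fderiv_fun_mul hu hv]
  simp only [ContinuousLinearMap.add_apply, ContinuousLinearMap.coe_smul',
    Pi.smul_apply, smul_eq_mul]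
  ring

lemma Xd_coordx (n : ℕ) (j : Fin n) (p : Hspace n) :
    Xd n j (fun q : Hspace n => q.1 j) p = 1 := by
  unfold Xd
  rw [fderiv_cx]
  norm_num [cx]

lemma Yd_coordy (n : ℕ) (j : Fin n) (p : Hspace n) :
    Yd n j (fun q : Hspace n => q.2.1 j) p = 1 := by
  unfold Yd
  rw [fderiv_cy]
  norm_num [cy]

section main

variable {n : ℕ} {φ : Hspace n → ℝ}

/-- `S p = ∑_j (x_j X_jφ + y_j Y_jφ) p`. -/
def Sfun (n : ℕ) (φ : Hspace n → ℝ) (p : Hspace n) : ℝ :=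
  ∑ j : Fin n, (p.1 j * Xd n j φ p + p.2.1 j * Yd n j φ p)

lemma Xd_cont (hφ : ContDiff ℝ (⊤ : ℕ∞) φ) (j : Fin n) : Continuous (fun p => Xd n j φ p) := by
  have hdc : Continuous (fderiv ℝ φ) := hφ.continuous_fderiv (by simp)
  exact ((ContinuousLinearMap.apply ℝ ℝ ((Pi.single j 1, 0, 0) : Hspace n)).continuous.comp
    hdc).add ((continuous_const.mul ((continuous_apply j).comp
      (continuous_fst.comp continuous_snd))).mul
    ((ContinuousLinearMap.apply ℝ ℝ ((0, 0, 1) : Hspace n)).continuous.comp hdc))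

lemma Yd_cont (hφ : ContDiff ℝ (⊤ : ℕ∞) φ) (j : Fin n) : Continuous (fun p => Yd n j φ p) := by
  have hdc : Continuous (fderiv ℝ φ) := hφ.continuous_fderiv (by simp)
  exact ((ContinuousLinearMap.apply ℝ ℝ ((0, Pi.single j 1, 0) : Hspace n)).continuous.comp
    hdc).sub ((continuous_const.mul ((continuous_apply j).comp continuous_fst)).mul
    ((ContinuousLinearMap.apply ℝ ℝ ((0, 0, 1) : Hspace n)).continuous.comp hdc))

lemma Xd_zero_of_nmem (j : Fin n) {p : Hspace n} (hp : p ∉ tsupport φ) :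
    Xd n j φ p = 0 := by
  have : fderiv ℝ φ p = 0 := by
    by_contra h
    exact hp (support_fderiv_subset ℝ (f := φ) (by simpa [Function.mem_support] using h))
  simp [Xd, this]

lemma Yd_zero_of_nmem (j : Fin n) {p : Hspace n} (hp : p ∉ tsupport φ) :
    Yd n j φ p = 0 := by
  have : fderiv ℝ φ p = 0 := by
    by_contra h
    exact hp (support_fderiv_subset ℝ (f := φ) (by simpa [Function.mem_support] using h))
  simp [Yd, this]


lemma supp_of_phi_factor (hcs : HasCompactSupport φ) {f : Hspace n → ℝ}
    (h : ∀ p, φ p = 0 → f p = 0) : HasCompactSupport f :=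
  hcs.mono' fun p hp => subset_closure (show φ p ≠ 0 from fun h0 => hp (h p h0))

lemma zSq_nonneg (p : Hspace n) : 0 ≤ zSq n p :=
  Finset.sum_nonneg fun j _ => by positivity

lemma gradH2_nonneg (p : Hspace n) : 0 ≤ gradH2 n φ p :=
  Finset.sum_nonneg fun j _ => by positivity

lemma zSq_cont : Continuous (zSq n) := by
  unfold zSq
  refine continuous_finset_sum _ fun j _ => ?_
  exact (((continuous_apply j).comp continuous_fst).pow 2).add
    (((continuous_apply j).comp (continuous_fst.comp continuous_snd)).pow 2)

lemma gradH2_cont (hφ : ContDiff ℝ (⊤ : ℕ∞) φ) : Continuous (gradH2 n φ) := by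
  unfold gradH2
  exact continuous_finset_sum _ fun j _ =>
    ((Xd_cont hφ j).pow 2).add ((Yd_cont hφ j).pow 2)

lemma Sfun_cont (hφ : ContDiff ℝ (⊤ : ℕ∞) φ) : Continuous (Sfun n φ) := by
  unfold Sfun
  refine continuous_finset_sum _ fun j _ => ?_
  exact (((continuous_apply j).comp continuous_fst).mul (Xd_cont hφ j)).add
    (((continuous_apply j).comp (continuous_fst.comp continuous_snd)).mul (Yd_cont hφ j))

lemma Sfun_sq_le (p : Hspace n) : (Sfun n φ p)^2 ≤ zSq n p * gradH2 n φ p := by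
  have h := Finset.sum_mul_sq_le_sq_mul_sq Finset.univ
    (fun jb : Fin n × Bool => if jb.2 then p.1 jb.1 else p.2.1 jb.1)
    (fun jb : Fin n × Bool => if jb.2 then Xd n jb.1 φ p else Yd n jb.1 φ p)
  have e1 : ∑ jb : Fin n × Bool,
      (if jb.2 then p.1 jb.1 else p.2.1 jb.1) * (if jb.2 then Xd n jb.1 φ p else Yd n jb.1 φ p)
      = Sfun n φ p := by
    rw [Fintype.sum_prod_type, Sfun]
    refine Finset.sum_congr rfl fun j _ => ?_
    simp [add_comm]
  have e2 : ∑ jb : Fin n × Bool, (if jb.2 then p.1 jb.1 else p.2.1 jb.1)^2 = zSq n p := by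
    rw [Fintype.sum_prod_type, zSq]
    refine Finset.sum_congr rfl fun j _ => ?_
    simp [add_comm]
  have e3 : ∑ jb : Fin n × Bool,
      (if jb.2 then Xd n jb.1 φ p else Yd n jb.1 φ p)^2 = gradH2 n φ p := by
    rw [Fintype.sum_prod_type, gradH2]
    refine Finset.sum_congr rfl fun j _ => ?_
    simp [add_comm]
  rw [e1, e2, e3] at h
  exact h

lemma real_main (hφ : ContDiff ℝ (⊤ : ℕ∞) φ) (hcs : HasCompactSupport φ) :
    ((n:ℝ) * ∫ p, (φ p)^2)^2 ≤ (∫ p, zSq n p * (φ p)^2) * (∫ p, gradH2 n φ p) := by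
  have hdiff : Differentiable ℝ φ := hφ.differentiable (by simp)
  -- integrability of the basic integrands
  have hIm : Integrable (fun p : Hspace n => (φ p)^2) :=
    (hφ.continuous.pow 2).integrable_of_hasCompactSupport
      (supp_of_phi_factor hcs (fun p h => by simp [h]))
  have hIx : ∀ j : Fin n, Integrable (fun p : Hspace n => p.1 j * (2 * φ p * Xd n j φ p)) := by
    intro j
    refine Continuous.integrable_of_hasCompactSupport ?_ ?_
    · exact ((continuous_apply j).comp continuous_fst).mul
        ((continuous_const.mul hφ.continuous).mul (Xd_cont hφ j))
    · exact supp_of_phi_factor hcs (fun p h => by simp [h])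
  have hIy : ∀ j : Fin n, Integrable (fun p : Hspace n => p.2.1 j * (2 * φ p * Yd n j φ p)) := by
    intro j
    refine Continuous.integrable_of_hasCompactSupport ?_ ?_
    · exact ((continuous_apply j).comp (continuous_fst.comp continuous_snd)).mul
        ((continuous_const.mul hφ.continuous).mul (Yd_cont hφ j))
    · exact supp_of_phi_factor hcs (fun p h => by simp [h])
  have hIφS : Integrable (fun p : Hspace n => φ p * Sfun n φ p) :=
    (hφ.continuous.mul (Sfun_cont hφ)).integrable_of_hasCompactSupport
      (supp_of_phi_factor hcs (fun p h => by simp [h]))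
  -- IBP in the X direction
  have e1 : ∀ j : Fin n, (∫ p, (φ p)^2) = - ∫ p, p.1 j * (2 * φ p * Xd n j φ p) := by
    intro j
    have hw : ContDiff ℝ 1 (fun q : Hspace n => q.1 j * (φ q)^2) :=
      (((cx n j).contDiff (n := 1)).mul ((hφ.of_le (by simp)).pow 2))
    have hwc : HasCompactSupport (fun q : Hspace n => q.1 j * (φ q)^2) :=
      supp_of_phi_factor hcs (fun p h => by simp [h])
    have h0 := int_Xd_eq_zero n j _ hw hwc
    have hXsq : ∀ p, Xd n j (fun q => (φ q)^2) p = 2 * φ p * Xd n j φ p := by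
      intro p
      have h2 : (fun q : Hspace n => (φ q)^2) = fun q => φ q * φ q := by ext q; ring
      rw [h2, Xd_mul n j φ φ p (hdiff p) (hdiff p)]; ring
    have hXder : ∀ p, Xd n j (fun q : Hspace n => q.1 j * (φ q)^2) p
        = (φ p)^2 + p.1 j * (2 * φ p * Xd n j φ p) := by
      intro p
      rw [Xd_mul n j (fun q : Hspace n => q.1 j) (fun q => (φ q)^2) p
        ((cx n j).differentiable.differentiableAt) ((hdiff p).pow 2),
        Xd_coordx, hXsq p]
      ring
    simp only [hXder] at h0
    rw [integral_add hIm (hIx j)] at h0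
    linarith
  -- IBP in the Y direction
  have e2 : ∀ j : Fin n, (∫ p, (φ p)^2) = - ∫ p, p.2.1 j * (2 * φ p * Yd n j φ p) := by
    intro j
    have hw : ContDiff ℝ 1 (fun q : Hspace n => q.2.1 j * (φ q)^2) :=
      (((cy n j).contDiff (n := 1)).mul ((hφ.of_le (by simp)).pow 2))
    have hwc : HasCompactSupport (fun q : Hspace n => q.2.1 j * (φ q)^2) :=
      supp_of_phi_factor hcs (fun p h => by simp [h])
    have h0 := int_Yd_eq_zero n j _ hw hwc
    have hYsq : ∀ p, Yd n j (fun q => (φ q)^2) p = 2 * φ p * Yd n j φ p := by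
      intro p
      have h2 : (fun q : Hspace n => (φ q)^2) = fun q => φ q * φ q := by ext q; ring
      rw [h2, Yd_mul n j φ φ p (hdiff p) (hdiff p)]; ring
    have hYder : ∀ p, Yd n j (fun q : Hspace n => q.2.1 j * (φ q)^2) p
        = (φ p)^2 + p.2.1 j * (2 * φ p * Yd n j φ p) := by
      intro p
      rw [Yd_mul n j (fun q : Hspace n => q.2.1 j) (fun q => (φ q)^2) p
        ((cy n j).differentiable.differentiableAt) ((hdiff p).pow 2),
        Yd_coordy, hYsq p]
      ring
    simp only [hYder] at h0
    rw [integral_add hIm (hIy j)] at h0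
    linarith
  set m := ∫ p, (φ p)^2 with hm
  -- summation over j
  have hsum : (2*(n:ℝ)) * m = - ∫ p, 2 * φ p * Sfun n φ p := by
    have hj : ∀ j : Fin n, (2:ℝ) * m
        = - ∫ p, (p.1 j * (2 * φ p * Xd n j φ p) + p.2.1 j * (2 * φ p * Yd n j φ p)) := by
      intro j
      rw [integral_add (hIx j) (hIy j)]
      have a1 := e1 j; have a2 := e2 j
      linarith
    have hptsum : ∀ p : Hspace n,
        (∑ j : Fin n, (p.1 j * (2 * φ p * Xd n j φ p) + p.2.1 j * (2 * φ p * Yd n j φ p)))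
        = 2 * φ p * Sfun n φ p := by
      intro p
      rw [Sfun, Finset.mul_sum]
      exact Finset.sum_congr rfl fun j _ => by ring
    calc (2*(n:ℝ)) * m = ∑ _j : Fin n, (2:ℝ) * m := by
          rw [Finset.sum_const, Finset.card_univ, Fintype.card_fin, nsmul_eq_mul]; ring
      _ = ∑ j : Fin n,
          - ∫ p, (p.1 j * (2 * φ p * Xd n j φ p) + p.2.1 j * (2 * φ p * Yd n j φ p)) :=
          Finset.sum_congr rfl fun j _ => hj j
      _ = - ∑ j : Fin n,
          ∫ p, (p.1 j * (2 * φ p * Xd n j φ p) + p.2.1 j * (2 * φ p * Yd n j φ p)) := by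
          rw [← Finset.sum_neg_distrib]
      _ = - ∫ p, ∑ j : Fin n,
          (p.1 j * (2 * φ p * Xd n j φ p) + p.2.1 j * (2 * φ p * Yd n j φ p)) := by
          congr 1
          exact (integral_finset_sum (f := fun (j : Fin n) (p : Hspace n) =>
            p.1 j * (2 * φ p * Xd n j φ p) + p.2.1 j * (2 * φ p * Yd n j φ p))
            Finset.univ (fun j _ => (hIx j).add (hIy j))).symm
      _ = - ∫ p, 2 * φ p * Sfun n φ p := by simp only [hptsum]
  have hnm : (n:ℝ) * m = - ∫ p, φ p * Sfun n φ p := by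
    have h2 : ∫ p, 2 * φ p * Sfun n φ p = 2 * ∫ p, φ p * Sfun n φ p := by
      rw [← integral_const_mul]; congr 1; ext p; ring
    rw [h2] at hsum
    linarith
  -- Cauchy–Schwarz
  set u : Hspace n → ℝ := fun p => Real.sqrt (zSq n p * (φ p)^2) with hu
  set v : Hspace n → ℝ := fun p => Real.sqrt (gradH2 n φ p) with hv
  have huC : Continuous u := Real.continuous_sqrt.comp (zSq_cont.mul (hφ.continuous.pow 2))
  have hvC : Continuous v := Real.continuous_sqrt.comp (gradH2_cont hφ)
  have huS : HasCompactSupport u :=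
    supp_of_phi_factor hcs (fun p h => by simp [hu, h])
  have hvS : HasCompactSupport v := by
    apply hcs.mono'
    intro p hp
    by_contra hmem
    apply hp
    have hg : gradH2 n φ p = 0 := by
      simp [gradH2, Xd_zero_of_nmem _ hmem, Yd_zero_of_nmem _ hmem]
    simp [hv, hg]
  have hptw : ∀ p, |φ p * Sfun n φ p| ≤ u p * v p := by
    intro p
    have h1 : (φ p * Sfun n φ p)^2 ≤ (zSq n p * (φ p)^2) * gradH2 n φ p := by
      have := Sfun_sq_le (φ := φ) p
      nlinarith [sq_nonneg (φ p), gradH2_nonneg (φ := φ) p]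
    calc |φ p * Sfun n φ p| = Real.sqrt ((φ p * Sfun n φ p)^2) := (Real.sqrt_sq_eq_abs _).symm
      _ ≤ Real.sqrt ((zSq n p * (φ p)^2) * gradH2 n φ p) := Real.sqrt_le_sqrt h1
      _ = u p * v p := by
          rw [Real.sqrt_mul (mul_nonneg (zSq_nonneg p) (sq_nonneg _))]
  have hIuv : Integrable (fun p : Hspace n => u p * v p) :=
    (huC.mul hvC).integrable_of_hasCompactSupport (huS.mul_right)
  have hHolder : ∫ p, u p * v p
      ≤ (∫ p, u p ^ (2:ℝ)) ^ ((1:ℝ)/2) * (∫ p, v p ^ (2:ℝ)) ^ ((1:ℝ)/2) := by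
    refine integral_mul_le_Lp_mul_Lq_of_nonneg ?_ ?_ ?_ ?_ ?_
    · constructor <;> norm_num
    · exact Filter.Eventually.of_forall fun p => Real.sqrt_nonneg _
    · exact Filter.Eventually.of_forall fun p => Real.sqrt_nonneg _
    · have := huC.memLp_of_hasCompactSupport (μ := volume) (p := 2) huS
      simpa [ENNReal.ofReal_ofNat] using this
    · have := hvC.memLp_of_hasCompactSupport (μ := volume) (p := 2) hvS
      simpa [ENNReal.ofReal_ofNat] using this
  have hu2 : ∀ p, u p ^ (2:ℝ) = zSq n p * (φ p)^2 := by
    intro p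
    rw [show (2:ℝ) = ((2:ℕ):ℝ) by norm_num, Real.rpow_natCast]
    exact Real.sq_sqrt (mul_nonneg (zSq_nonneg p) (sq_nonneg _))
  have hv2 : ∀ p, v p ^ (2:ℝ) = gradH2 n φ p := by
    intro p
    rw [show (2:ℝ) = ((2:ℕ):ℝ) by norm_num, Real.rpow_natCast]
    exact Real.sq_sqrt (gradH2_nonneg p)
  set a := ∫ p, zSq n p * (φ p)^2 with ha
  set b := ∫ p, gradH2 n φ p with hb
  have ha0 : 0 ≤ a := integral_nonneg fun p => mul_nonneg (zSq_nonneg p) (sq_nonneg _)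
  have hb0 : 0 ≤ b := integral_nonneg fun p => gradH2_nonneg p
  have hfin : (n:ℝ) * m ≤ Real.sqrt a * Real.sqrt b := by
    calc (n:ℝ) * m = - ∫ p, φ p * Sfun n φ p := hnm
      _ ≤ |∫ p, φ p * Sfun n φ p| := neg_le_abs _
      _ ≤ ∫ p, |φ p * Sfun n φ p| := by
          simpa [Real.norm_eq_abs, abs_mul] using
            norm_integral_le_integral_norm (μ := volume) (fun p : Hspace n => φ p * Sfun n φ p)
      _ ≤ ∫ p, u p * v p := integral_mono hIφS.abs hIuv hptw
      _ ≤ (∫ p, u p ^ (2:ℝ)) ^ ((1:ℝ)/2) * (∫ p, v p ^ (2:ℝ)) ^ ((1:ℝ)/2) := hHolder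
      _ = Real.sqrt a * Real.sqrt b := by
          simp only [hu2, hv2, ← Real.sqrt_eq_rpow]
          rfl
  have hnm0 : 0 ≤ (n:ℝ) * m := by
    have : 0 ≤ m := integral_nonneg fun p => sq_nonneg _
    positivity
  calc ((n:ℝ) * m)^2 ≤ (Real.sqrt a * Real.sqrt b)^2 := by
        exact pow_le_pow_left₀ hnm0 hfin 2
    _ = a * b := by
        rw [mul_pow, Real.sq_sqrt ha0, Real.sq_sqrt hb0]

end main

/-- second uncertainty principle inequality on ℍⁿ:
`(∫ |z|² φ²) · (∫ |∇_ℍ φ|²) ≥ ((Q − 2)/2)² (∫ (|z|²/ρ²) φ²)²`. -/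
theorem heisenberg_uncertainty' (n : ℕ) (hn : 1 ≤ n) (Q : ℝ) (hQ : Q = 2 * n + 2)
    (φ : Hspace n → ℝ) (hφ : ContDiff ℝ (⊤ : ℕ∞) φ) (hcs : HasCompactSupport φ)
    (h0 : (0 : Hspace n) ∉ tsupport φ) :
    (∫⁻ p, ENNReal.ofReal (zSq n p * (φ p) ^ 2)) *
        (∫⁻ p, ENNReal.ofReal (gradH2 n φ p)) ≥
      ENNReal.ofReal (((Q - 2) / 2) ^ 2) *
        (∫⁻ p, ENNReal.ofReal ((zSq n p / rho n p ^ 2) * (φ p) ^ 2)) ^ 2 := by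
  have hQn : ((Q - 2) / 2)^2 = ((n:ℝ))^2 := by rw [hQ]; ring
  -- integrability
  have hIm : Integrable (fun p : Hspace n => (φ p)^2) :=
    (hφ.continuous.pow 2).integrable_of_hasCompactSupport
      (supp_of_phi_factor hcs (fun p h => by simp [h]))
  have hIa : Integrable (fun p : Hspace n => zSq n p * (φ p)^2) :=
    (zSq_cont.mul (hφ.continuous.pow 2)).integrable_of_hasCompactSupport
      (supp_of_phi_factor hcs (fun p h => by simp [h]))
  have hIb : Integrable (gradH2 n φ) := by
    refine (gradH2_cont hφ).integrable_of_hasCompactSupport ?_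
    apply hcs.mono'
    intro p hp
    by_contra hmem
    exact hp (by simp [gradH2, Xd_zero_of_nmem _ hmem, Yd_zero_of_nmem _ hmem])
  -- conversions
  have c1 : ∫⁻ p, ENNReal.ofReal (zSq n p * (φ p)^2)
      = ENNReal.ofReal (∫ p, zSq n p * (φ p)^2) :=
    (ofReal_integral_eq_lintegral_ofReal hIa (Filter.Eventually.of_forall fun p =>
      mul_nonneg (zSq_nonneg p) (sq_nonneg _))).symm
  have c2 : ∫⁻ p, ENNReal.ofReal (gradH2 n φ p)
      = ENNReal.ofReal (∫ p, gradH2 n φ p) :=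
    (ofReal_integral_eq_lintegral_ofReal hIb (Filter.Eventually.of_forall fun p =>
      gradH2_nonneg p)).symm
  have c3 : ∫⁻ p, ENNReal.ofReal ((φ p)^2)
      = ENNReal.ofReal (∫ p, (φ p)^2) :=
    (ofReal_integral_eq_lintegral_ofReal hIm (Filter.Eventually.of_forall fun p =>
      sq_nonneg _)).symm
  -- pointwise bound for the weighted integrand
  have hptw : ∀ p : Hspace n, (zSq n p / rho n p ^ 2) * (φ p)^2 ≤ (φ p)^2 := by
    intro p
    rcases (zSq_nonneg p).eq_or_lt with h | h
    · rw [← h]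
      simpa using sq_nonneg (φ p)
    · have hr2 : rho n p ^ 2 = Real.sqrt (zSq n p^2 + p.2.2^2) := by
        rw [rho, Real.sqrt_eq_rpow, ← Real.rpow_natCast _ 2, ← Real.rpow_mul (by positivity)]
        norm_num
      have hpos : 0 < rho n p ^ 2 := by
        rw [hr2]
        exact Real.sqrt_pos.mpr (by positivity)
      have hle' : zSq n p ≤ rho n p ^ 2 := by
        rw [hr2]
        calc zSq n p = Real.sqrt ((zSq n p)^2) := (Real.sqrt_sq h.le).symm
          _ ≤ Real.sqrt (zSq n p^2 + p.2.2^2) :=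
            Real.sqrt_le_sqrt (le_add_of_nonneg_right (sq_nonneg _))
      exact mul_le_of_le_one_left (sq_nonneg _) ((div_le_one hpos).mpr hle')
  have hle : (∫⁻ p, ENNReal.ofReal ((zSq n p / rho n p ^ 2) * (φ p)^2))
      ≤ ENNReal.ofReal (∫ p, (φ p)^2) := by
    rw [← c3]
    exact lintegral_mono fun p => ENNReal.ofReal_le_ofReal (hptw p)
  have hm0 : 0 ≤ ∫ p, (φ p)^2 := integral_nonneg fun p => sq_nonneg _
  have ha0 : 0 ≤ ∫ p, zSq n p * (φ p)^2 :=
    integral_nonneg fun p => mul_nonneg (zSq_nonneg p) (sq_nonneg _)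
  calc ENNReal.ofReal (((Q - 2) / 2) ^ 2) *
        (∫⁻ p, ENNReal.ofReal ((zSq n p / rho n p ^ 2) * (φ p) ^ 2)) ^ 2
      ≤ ENNReal.ofReal (((n:ℝ))^2) * (ENNReal.ofReal (∫ p, (φ p)^2))^2 := by
        rw [hQn]
        exact mul_le_mul_right (pow_le_pow_left' hle 2) _
    _ = ENNReal.ofReal (((n:ℝ))^2 * (∫ p, (φ p)^2)^2) := by
        rw [← ENNReal.ofReal_pow hm0, ← ENNReal.ofReal_mul (by positivity)]
    _ ≤ ENNReal.ofReal ((∫ p, zSq n p * (φ p)^2) * (∫ p, gradH2 n φ p)) := by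
        apply ENNReal.ofReal_le_ofReal
        calc ((n:ℝ))^2 * (∫ p, (φ p)^2)^2 = ((n:ℝ) * ∫ p, (φ p)^2)^2 := by ring
          _ ≤ (∫ p, zSq n p * (φ p)^2) * (∫ p, gradH2 n φ p) := real_main hφ hcs
    _ = ENNReal.ofReal (∫ p, zSq n p * (φ p)^2) * ENNReal.ofReal (∫ p, gradH2 n φ p) :=
        ENNReal.ofReal_mul ha0
    _ = (∫⁻ p, ENNReal.ofReal (zSq n p * (φ p) ^ 2)) *
        (∫⁻ p, ENNReal.ofReal (gradH2 n φ p)) := by rw [c1, c2]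
end
end
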